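/- arXiv:cs/0506083 — 6 statements merged into one kernel-verified Lean document; each statement's English description precedes it below -/
import Mathlib

section
/- Let n ≥ 1, let X be a random binary vector of length n with an arbitrary distribution on a finite set, and let Y(ε) be obtained by passing each coordinate of X independently through a binary erasure channel with erasure probability ε. Then the normalized conditional entropy satisfies H(X | Y(1))/n = ∫₀¹ (1/n) Σ_{i=1}^n H(X_i | Y_{∼i}(ε)) dε, where Y_{∼i} denotes all outputs except the i-th. -/
open Finset

/-- Entropy of the marginal distribution of the bits indexed by `T`,
for a random binary vector of length `n` with pmf `p` (natural-log entropy). -/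
noncomputable def margEnt (n : ℕ) (p : (Fin n → Bool) → ℝ) (T : Finset (Fin n)) : ℝ :=
  ∑ f : {i // i ∈ T} → Bool,
    Real.negMulLog (∑ x : Fin n → Bool, if (∀ i : {i // i ∈ T}, x i.1 = f i) then p x else 0)

/-- Conditional entropy `H(X | Y(ε))` for transmission of `X ~ p` over `BEC(ε)`:
average over erasure patterns `S` (the erased positions) of `H(X | X_{Sᶜ})`. -/
noncomputable def condH (n : ℕ) (p : (Fin n → Bool) → ℝ) (ε : ℝ) : ℝ :=
  ∑ S : Finset (Fin n),
    ε ^ S.card * (1 - ε) ^ (n - S.card) * (margEnt n p Finset.univ - margEnt n p Sᶜ)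

/-- Extrinsic bit entropy `H(X_i | Y_{∼i}(ε))`: average over erasure patterns `S`
among the positions other than `i` of `H(X_i | X_K)` where `K` is the set of
known (unerased) positions other than `i`. -/
noncomputable def exitBit (n : ℕ) (p : (Fin n → Bool) → ℝ) (i : Fin n) (ε : ℝ) : ℝ :=
  ∑ S ∈ (Finset.univ.erase i).powerset,
    ε ^ S.card * (1 - ε) ^ (n - 1 - S.card) *
      (margEnt n p (insert i ((Finset.univ.erase i) \ S)) -
        margEnt n p ((Finset.univ.erase i) \ S))

/-!
With `H S := H(X) - H(X_{Sᶜ})` the equivocation when exactly the positions in `S` are erased,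
`condH n p ε = ∑ S, ε ^ |S| * (1 - ε) ^ (n - |S|) * H S`. Differentiating the weights, each pair
`(i, S)` with `i ∉ S` contributes once through `S` and once through `insert i S`, and regrouping
by `i` shows that the derivative in `ε` is `∑ i, exitBit n p i ε`, for any set function `H`.
Nothing is erased at `ε = 0`, so `condH n p 0 = 0`, and the area theorem is the fundamental
theorem of calculus on `[0, 1]`.
-/

section
variable {ι M : Type*} [Fintype ι] [DecidableEq ι] [AddCommMonoid M]

theorem sum_sum_powerset_univ_erase (F : Finset ι → M) :
    ∑ i, ∑ S ∈ (univ.erase i).powerset, F S = ∑ S, #Sᶜ • F S := by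
  rw [sum_comm' (t' := univ) (s' := fun S => Sᶜ) (by simp [subset_erase])]
  simp only [sum_const]

theorem sum_sum_powerset_univ_erase_insert (F : Finset ι → M) :
    ∑ i, ∑ S ∈ (univ.erase i).powerset, F (insert i S) = ∑ S, #S • F S := by
  have reindex (i : ι) : ∑ S ∈ (univ.erase i).powerset, F (insert i S)
      = ∑ T ∈ univ.filter (i ∈ ·), F T := by
    apply sum_nbij' (insert i) (·.erase i) <;> intro S hS <;> simp_all [subset_erase]
  simp only [reindex]
  rw [sum_comm' (t' := univ) (s' := id) (by simp)]
  simp only [id, sum_const]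
end

theorem hasDerivAt_pow_mul_one_sub_pow (k l : ℕ) (x : ℝ) :
    HasDerivAt (fun x => x ^ k * (1 - x) ^ l)
      (k * x ^ (k - 1) * (1 - x) ^ l - l * x ^ k * (1 - x) ^ (l - 1)) x := by
  have h := (hasDerivAt_pow k x).mul (((hasDerivAt_id x).const_sub 1).pow l)
  exact h.congr_deriv (by simp only [id, Pi.pow_apply]; ring)

section
variable {ι : Type*} [Fintype ι] [DecidableEq ι]

theorem hasDerivAt_sum_pow_mul_one_sub_pow (H : Finset ι → ℝ) (x : ℝ) :
    HasDerivAt (fun x => ∑ S, x ^ #S * (1 - x) ^ (Fintype.card ι - #S) * H S)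
      (∑ i, ∑ S ∈ (univ.erase i).powerset,
        x ^ #S * (1 - x) ^ (Fintype.card ι - 1 - #S) * (H (insert i S) - H S)) x := by
  set N := Fintype.card ι
  have hsum := HasDerivAt.fun_sum (u := univ) fun S _ =>
    (hasDerivAt_pow_mul_one_sub_pow #S (N - #S) x).mul_const (H S)
  refine hsum.congr_deriv ?_
  have gain : ∑ i, ∑ S ∈ (univ.erase i).powerset, x ^ #S * (1 - x) ^ (N - 1 - #S) * H (insert i S)
      = ∑ T, #T • (x ^ (#T - 1) * (1 - x) ^ (N - #T) * H T) := by
    rw [← sum_sum_powerset_univ_erase_insert]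
    refine sum_congr rfl fun i _ => sum_congr rfl fun S hS => ?_
    have hi : i ∉ S := (subset_erase.1 (mem_powerset.1 hS)).2
    rw [card_insert_of_notMem hi, Nat.add_sub_cancel, Nat.sub_sub, Nat.add_comm 1]
  have loss : ∑ i, ∑ S ∈ (univ.erase i).powerset, x ^ #S * (1 - x) ^ (N - 1 - #S) * H S
      = ∑ S, #Sᶜ • (x ^ #S * (1 - x) ^ (N - #S - 1) * H S) := by
    rw [← sum_sum_powerset_univ_erase]
    simp only [Nat.sub_right_comm N 1]
  simp only [mul_sub, sum_sub_distrib]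
  rw [gain, loss, ← sum_sub_distrib]
  refine sum_congr rfl fun S _ => ?_
  rw [card_compl, nsmul_eq_mul, nsmul_eq_mul]
  ring
end

theorem exitBit_eq (n : ℕ) (p : (Fin n → Bool) → ℝ) (i : Fin n) (ε : ℝ) :
    exitBit n p i ε = ∑ S ∈ (univ.erase i).powerset, ε ^ #S * (1 - ε) ^ (n - 1 - #S) *
      ((margEnt n p univ - margEnt n p (insert i S)ᶜ) - (margEnt n p univ - margEnt n p Sᶜ)) := by
  refine sum_congr rfl fun S hS => ?_
  have hi : i ∉ S := (subset_erase.1 (mem_powerset.1 hS)).2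
  have known : univ.erase i \ S = (insert i S)ᶜ := by ext; simp [and_comm]
  rw [known, ← compl_erase, erase_insert hi]
  ring

theorem hasDerivAt_condH (n : ℕ) (p : (Fin n → Bool) → ℝ) (ε : ℝ) :
    HasDerivAt (condH n p) (∑ i, exitBit n p i ε) ε := by
  have h := hasDerivAt_sum_pow_mul_one_sub_pow (fun S => margEnt n p univ - margEnt n p Sᶜ) ε
  simp only [Fintype.card_fin] at h
  simp only [exitBit_eq]
  exact h

theorem condH_zero (n : ℕ) (p : (Fin n → Bool) → ℝ) : condH n p 0 = 0 := by
  refine sum_eq_zero fun S _ => ?_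
  rcases S.eq_empty_or_nonempty with rfl | hS
  · simp
  · simp [zero_pow hS.card_pos.ne']

theorem continuous_exitBit (n : ℕ) (p : (Fin n → Bool) → ℝ) (i : Fin n) :
    Continuous (exitBit n p i) := by
  unfold exitBit
  fun_prop

theorem bec_area_theorem_general (n : ℕ) (p : (Fin n → Bool) → ℝ) :
    condH n p 1 / n = ∫ ε in (0:ℝ)..1, (1 / (n : ℝ)) * ∑ i : Fin n, exitBit n p i ε := by
  have ftc : ∫ ε in (0:ℝ)..1, ∑ i, exitBit n p i ε = condH n p 1 - condH n p 0 :=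
    intervalIntegral.integral_eq_sub_of_hasDerivAt (fun ε _ => hasDerivAt_condH n p ε)
      ((continuous_finsetSum _ fun i _ => continuous_exitBit n p i).intervalIntegrable 0 1)
  rw [intervalIntegral.integral_const_mul, ftc, condH_zero]
  ring

/-- **Area Theorem for the BEC**: `H(X | Y(1))/n = ∫₀¹ (1/n) ∑ᵢ H(Xᵢ | Y_{∼i}(ε)) dε`. -/
theorem bec_area_theorem (n : ℕ) (hn : 1 ≤ n) (p : (Fin n → Bool) → ℝ)
    (hp : ∀ x, 0 ≤ p x) (hp1 : ∑ x, p x = 1) :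
    condH n p 1 / n = ∫ ε in (0:ℝ)..1, (1 / (n : ℝ)) * ∑ i : Fin n, exitBit n p i ε :=
  bec_area_theorem_general n p
end

section
/- For integers l ≥ 3 and r ≥ 3, define W(x) = 1 − (1−x)^{r−1} − (l−1)(r−1)(1−x)^{r−2} x for x ∈ [0,1]. Then W has exactly one root in the open interval (0,1). -/
/-!
Substituting `u = 1 - x` turns `W x = 0` into `g u = 1` for
`g u = c u^(r-2) + (1 - c) u^(r-1)` with `c = (l-1)(r-1)`. Now `g 0 = 0`, `g 1 = 1`, and `g'` changes
sign once, at `t = c(r-2)/((c-1)(r-1))`, which lies in `(0,1)` because `c > r - 1`. So `g` rises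
strictly from `0` to `g t > g 1 = 1` and then falls strictly back to `1`: it takes the value `1`
exactly once in `(0,1)`, on the rising branch.
-/

open Set

theorem existsUnique_mem_Ioo_eq_of_strictMonoOn_of_strictAntiOn {f : ℝ → ℝ} {a t b y : ℝ}
    (hat : a ≤ t) (htb : t < b) (hf : ContinuousOn f (Icc a b))
    (hmono : StrictMonoOn f (Icc a t)) (hanti : StrictAntiOn f (Icc t b))
    (ha : f a < y) (hb : f b = y) :
    ∃! x, x ∈ Ioo a b ∧ f x = y := by
  have hbt : y < f t := hb ▸ hanti (left_mem_Icc.2 htb.le) (right_mem_Icc.2 htb.le) htb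
  obtain ⟨x, hx, hfx⟩ := intermediate_value_Ioo hat (hf.mono (Icc_subset_Icc_right htb.le)) ⟨ha, hbt⟩
  refine ⟨x, ⟨⟨hx.1, hx.2.trans htb⟩, hfx⟩, fun v ⟨hv, hfv⟩ => ?_⟩
  have hvt : v < t := by
    by_contra! htv
    exact (hanti ⟨htv, hv.2.le⟩ ⟨htb.le, le_rfl⟩ hv.2).ne' (hfv.trans hb.symm)
  exact hmono.injOn ⟨hv.1.le, hvt.le⟩ ⟨hx.1.le, hx.2.le⟩ (hfv.trans hfx.symm)

theorem hasDerivAt_mul_pow_add_mul_pow_succ (c : ℝ) (m : ℕ) (u : ℝ) :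
    HasDerivAt (fun u => c * u ^ (m + 1) + (1 - c) * u ^ (m + 2))
      (u ^ m * (c * (m + 1) - (c - 1) * (m + 2) * u)) u := by
  refine (((hasDerivAt_pow (m + 1) u).const_mul c).add
    ((hasDerivAt_pow (m + 2) u).const_mul (1 - c))).congr_deriv ?_
  simp only [Nat.add_sub_cancel]
  push_cast
  ring

theorem existsUnique_mem_Ioo_mul_pow_add_mul_pow_succ_eq_one {c : ℝ} {m : ℕ}
    (hc : (m : ℝ) + 2 < c) :
    ∃! u, u ∈ Ioo (0 : ℝ) 1 ∧ c * u ^ (m + 1) + (1 - c) * u ^ (m + 2) = 1 := by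
  have hc1 : 0 < c - 1 := by linarith [(m.cast_nonneg : (0 : ℝ) ≤ m)]
  have hD : 0 < (c - 1) * (m + 2) := by positivity
  set t := c * (m + 1) / ((c - 1) * (m + 2))
  have ht0 : 0 < t := div_pos (by nlinarith) hD
  have ht1 : t < 1 := by rw [div_lt_one hD]; linarith
  have hderiv := hasDerivAt_mul_pow_add_mul_pow_succ c m
  have hcont : Continuous fun u : ℝ => c * u ^ (m + 1) + (1 - c) * u ^ (m + 2) := by fun_prop
  apply existsUnique_mem_Ioo_eq_of_strictMonoOn_of_strictAntiOn ht0.le ht1 hcont.continuousOn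
  · refine strictMonoOn_of_deriv_pos (convex_Icc 0 t) hcont.continuousOn fun u hu => ?_
    rw [interior_Icc] at hu
    rw [(hderiv u).deriv]
    have := (lt_div_iff₀ hD).1 hu.2
    exact mul_pos (pow_pos hu.1 _) (by linarith)
  · refine strictAntiOn_of_deriv_neg (convex_Icc t 1) hcont.continuousOn fun u hu => ?_
    rw [interior_Icc] at hu
    rw [(hderiv u).deriv]
    have := (div_lt_iff₀ hD).1 hu.1
    exact mul_neg_of_pos_of_neg (pow_pos (ht0.trans hu.1) _) (by linarith)
  · simp
  · simp

/-- For integers `l ≥ 3`, `r ≥ 3`, the function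
`W(x) = 1 − (1−x)^{r−1} − (l−1)(r−1)(1−x)^{r−2} x` has exactly one root in `(0,1)`. -/
theorem W_unique_root (l r : ℕ) (hl : 3 ≤ l) (hr : 3 ≤ r) :
    ∃! x : ℝ, x ∈ Set.Ioo (0:ℝ) 1 ∧
      1 - (1 - x) ^ (r - 1) - ((l : ℝ) - 1) * ((r : ℝ) - 1) * (1 - x) ^ (r - 2) * x = 0 := by
  obtain ⟨k, rfl⟩ : ∃ k, l = k + 3 := ⟨l - 3, by omega⟩
  obtain ⟨m, rfl⟩ : ∃ m, r = m + 3 := ⟨r - 3, by omega⟩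
  set c : ℝ := ((k : ℝ) + 2) * ((m : ℝ) + 2)
  have hc : (m : ℝ) + 2 < c := by nlinarith [(k.cast_nonneg : (0 : ℝ) ≤ k)]
  refine ((Equiv.subLeft (1 : ℝ)).existsUnique_congr fun x => ?_).2
    (existsUnique_mem_Ioo_mul_pow_add_mul_pow_succ_eq_one hc)
  have hW : 1 - (1 - x) ^ (m + 3 - 1) - ((↑(k + 3) : ℝ) - 1) * ((↑(m + 3) : ℝ) - 1) *
      (1 - x) ^ (m + 3 - 2) * x = 1 - (c * (1 - x) ^ (m + 1) + (1 - c) * (1 - x) ^ (m + 2)) := by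
    rw [show m + 3 - 1 = m + 2 by omega, show m + 3 - 2 = m + 1 by omega]
    push_cast
    ring
  simp only [Equiv.subLeft_apply, mem_Ioo, hW, sub_eq_zero, eq_comm (a := (1 : ℝ))]
  constructor <;> rintro ⟨⟨h0, h1⟩, h⟩ <;> exact ⟨⟨by linarith, by linarith⟩, h⟩
end

section
/- Let λ, ρ be edge-perspective degree distribution polynomials (nonnegative coefficients, λ(1)=ρ(1)=1, λ(0)=0). Define Λ'(1) = 1/∫₀¹λ, Γ'(1) = 1/∫₀¹ρ, Λ(u)=Λ'(1)∫₀ᵘλ, Γ(u)=Γ'(1)∫₀ᵘρ, and the trial entropy P_ε(x,y) = Λ'(1)·x·(1−y) − (Λ'(1)/Γ'(1))·[1 − Γ(1−x)] + ε·Λ(y). Then the partial derivatives satisfy ∂_x P_ε(x,y) = Λ'(1)·[1 − y − ρ(1−x)] and ∂_y P_ε(x,y) = Λ'(1)·[−x + ε·λ(y)]. Consequently (x,y) ∈ [0,1]² is a stationary point of P_ε if and only if it is a fixed point of density evolution: y = 1 − ρ(1−x) and x = ε·λ(y). -/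
open Polynomial

/-- `Λ'(1) = 1/∫₀¹λ`. -/
noncomputable def meanInv (lam : Polynomial ℝ) : ℝ := 1 / ∫ t in (0:ℝ)..1, lam.eval t

/-- `Λ(u) = Λ'(1)·∫₀ᵘ λ`. -/
noncomputable def nodeDist (lam : Polynomial ℝ) (u : ℝ) : ℝ :=
  meanInv lam * ∫ t in (0:ℝ)..u, lam.eval t

/-- Trial entropy `P_ε(x,y) = Λ'(1)·x·(1−y) − (Λ'(1)/Γ'(1))·[1 − Γ(1−x)] + ε·Λ(y)`. -/
noncomputable def trialEntropy (lam rho : Polynomial ℝ) (ε x y : ℝ) : ℝ :=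
  meanInv lam * x * (1 - y) - (meanInv lam / meanInv rho) * (1 - nodeDist rho (1 - x)) +
    ε * nodeDist lam y

/-! The partial derivatives come from the fundamental theorem of calculus applied to `Λ` and `Γ`.
What makes the formulas exact is that `Λ'(1)` and `Γ'(1)` are nonzero, so that `Λ'(1)/Γ'(1)`
cancels against `Γ'(1)` and `Λ'(1)` can be divided out of the stationarity equations: a nonzero
polynomial with nonnegative coefficients is positive on `(0, ∞)`, hence has positive integral
over `[0, 1]`. -/

namespace Polynomial

theorem eval_pos_of_coeff_nonneg {R : Type*} [Semiring R] [PartialOrder R]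
    [IsStrictOrderedRing R] {p : R[X]} (hc : ∀ k, 0 ≤ p.coeff k) (hp : p ≠ 0) {t : R}
    (ht : 0 < t) : 0 < p.eval t := by
  have hlead : 0 < p.leadingCoeff :=
    (hc _).lt_of_ne (Ne.symm (leadingCoeff_ne_zero.mpr hp))
  rw [eval_eq_sum_range]
  calc 0 < p.coeff p.natDegree * t ^ p.natDegree := mul_pos hlead (pow_pos ht _)
    _ ≤ ∑ i ∈ Finset.range (p.natDegree + 1), p.coeff i * t ^ i :=
      Finset.single_le_sum (f := fun i => p.coeff i * t ^ i)
        (fun i _ => mul_nonneg (hc i) (pow_nonneg ht.le _)) (Finset.self_mem_range_succ _)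

end Polynomial

theorem meanInv_pos {p : ℝ[X]} (hc : ∀ k, 0 ≤ p.coeff k) (hp : p ≠ 0) : 0 < meanInv p := by
  have hint : 0 < ∫ t in (0:ℝ)..1, p.eval t :=
    intervalIntegral.intervalIntegral_pos_of_pos_on (p.continuous.intervalIntegrable _ _)
      (fun _ ht => eval_pos_of_coeff_nonneg hc hp ht.1) one_pos
  exact one_div_pos.mpr hint

theorem hasDerivAt_nodeDist (p : ℝ[X]) (u : ℝ) :
    HasDerivAt (nodeDist p) (meanInv p * p.eval u) u :=
  (p.continuous.integral_hasStrictDerivAt 0 u).hasDerivAt.const_mul _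

theorem hasDerivAt_trialEntropy_fst (lam : ℝ[X]) {rho : ℝ[X]} (hrho : meanInv rho ≠ 0)
    (ε x y : ℝ) :
    HasDerivAt (fun t => trialEntropy lam rho ε t y)
      (meanInv lam * (1 - y - rho.eval (1 - x))) x := by
  have hΓ : HasDerivAt (fun t => nodeDist rho (1 - t)) (-(meanInv rho * rho.eval (1 - x))) x :=
    (hasDerivAt_nodeDist rho (1 - x)).comp_const_sub 1 x
  have h := ((((hasDerivAt_id x).const_mul (meanInv lam)).mul_const (1 - y)).sub
    ((hΓ.const_sub 1).const_mul (meanInv lam / meanInv rho))).add_const (ε * nodeDist lam y)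
  exact h.congr_deriv (by field_simp)

theorem hasDerivAt_trialEntropy_snd (lam rho : ℝ[X]) (ε x y : ℝ) :
    HasDerivAt (fun t => trialEntropy lam rho ε x t)
      (meanInv lam * (-x + ε * lam.eval y)) y := by
  have h := ((((hasDerivAt_id y).const_sub 1).const_mul (meanInv lam * x)).sub_const
    ((meanInv lam / meanInv rho) * (1 - nodeDist rho (1 - x)))).add
    ((hasDerivAt_nodeDist lam y).const_mul ε)
  exact h.congr_deriv (by ring)

theorem trial_entropy_stationary_general (lam rho : Polynomial ℝ)
    (hlc : ∀ k, 0 ≤ lam.coeff k) (hrc : ∀ k, 0 ≤ rho.coeff k)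
    (hl1 : lam.eval 1 = 1) (hr1 : rho.eval 1 = 1) :
    (∀ ε x y : ℝ,
      HasDerivAt (fun t => trialEntropy lam rho ε t y)
        (meanInv lam * (1 - y - rho.eval (1 - x))) x ∧
      HasDerivAt (fun t => trialEntropy lam rho ε x t)
        (meanInv lam * (-x + ε * lam.eval y)) y) ∧
    (∀ ε : ℝ, ∀ x ∈ Set.Icc (0:ℝ) 1, ∀ y ∈ Set.Icc (0:ℝ) 1,
      ((meanInv lam * (1 - y - rho.eval (1 - x)) = 0 ∧
        meanInv lam * (-x + ε * lam.eval y) = 0) ↔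
       (y = 1 - rho.eval (1 - x) ∧ x = ε * lam.eval y))) := by
  have hlam : meanInv lam ≠ 0 := (meanInv_pos hlc (by rintro rfl; simp at hl1)).ne'
  have hrho : meanInv rho ≠ 0 := (meanInv_pos hrc (by rintro rfl; simp at hr1)).ne'
  refine ⟨fun ε x y => ⟨hasDerivAt_trialEntropy_fst lam hrho ε x y,
    hasDerivAt_trialEntropy_snd lam rho ε x y⟩, fun ε x _ y _ => ?_⟩
  simp only [mul_eq_zero, hlam, false_or]
  constructor <;> rintro ⟨h₁, h₂⟩ <;> constructor <;> linarith

/-- The partial derivatives of the trial entropy are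
`∂ₓP = Λ'(1)[1 − y − ρ(1−x)]` and `∂_yP = Λ'(1)[−x + ε·λ(y)]`; consequently a
point `(x,y) ∈ [0,1]²` is stationary iff it is a density-evolution fixed point. -/
theorem trial_entropy_stationary (lam rho : Polynomial ℝ)
    (hlc : ∀ k, 0 ≤ lam.coeff k) (hrc : ∀ k, 0 ≤ rho.coeff k)
    (hl1 : lam.eval 1 = 1) (hr1 : rho.eval 1 = 1) (hl0 : lam.coeff 0 = 0)
    (hld : 1 ≤ lam.natDegree) (hrd : 1 ≤ rho.natDegree) :
    (∀ ε x y : ℝ,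
      HasDerivAt (fun t => trialEntropy lam rho ε t y)
        (meanInv lam * (1 - y - rho.eval (1 - x))) x ∧
      HasDerivAt (fun t => trialEntropy lam rho ε x t)
        (meanInv lam * (-x + ε * lam.eval y)) y) ∧
    (∀ ε : ℝ, ∀ x ∈ Set.Icc (0:ℝ) 1, ∀ y ∈ Set.Icc (0:ℝ) 1,
      ((meanInv lam * (1 - y - rho.eval (1 - x)) = 0 ∧
        meanInv lam * (-x + ε * lam.eval y) = 0) ↔
       (y = 1 - rho.eval (1 - x) ∧ x = ε * lam.eval y))) :=
  trial_entropy_stationary_general lam rho hlc hrc hl1 hr1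
end

section
/- Fix r ∈ (0,1). For the sequence of regular LDPC ensembles with degree pairs (l, l/(1−r)), the BP threshold ε^{BP}(l) := inf_{x ∈ (0,1]} x/(1−(1−x)^{l/(1−r)−1})^{l−1} tends to 0 as l → ∞. -/
open Filter Real Set Topology

/-!
Every value `x / (1 - (1 - x) ^ (dc - 1)) ^ (dv - 1)` is nonnegative, so it suffices to exhibit
one small value. At `x = log (2 dv) / (dc - 1)` we have
`(1 - x) ^ (dc - 1) ≤ exp (-x (dc - 1)) = 1 / (2 dv)`, so by Bernoulli's inequality the
denominator is at least `1 / 2` and the value is at most `2 log (2 dv) / (dc - 1)`. For `dv = l`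
and `dc = l / (1 - r) ≥ l` this is `O(log l / l)`.
-/

noncomputable def regularBPThreshold (dv dc : ℝ) : ℝ :=
  sInf ((fun x : ℝ => x / (1 - (1 - x) ^ (dc - 1)) ^ (dv - 1)) '' Ioc 0 1)

lemma div_one_sub_one_sub_rpow_rpow_nonneg (dv : ℝ) {dc x : ℝ} (hdc : 1 ≤ dc)
    (hx : x ∈ Ioc 0 1) : 0 ≤ x / (1 - (1 - x) ^ (dc - 1)) ^ (dv - 1) := by
  obtain ⟨hx0, hx1⟩ := hx
  have : (1 - x) ^ (dc - 1) ≤ 1 := rpow_le_one (by linarith) (by linarith) (by linarith)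
  exact div_nonneg hx0.le (rpow_nonneg (by linarith) _)

lemma regularBPThreshold_nonneg (dv : ℝ) {dc : ℝ} (hdc : 1 ≤ dc) :
    0 ≤ regularBPThreshold dv dc :=
  Real.sInf_nonneg <| by
    rintro _ ⟨x, hx, rfl⟩
    exact div_one_sub_one_sub_rpow_rpow_nonneg dv hdc hx

lemma regularBPThreshold_le (dv : ℝ) {dc x : ℝ} (hdc : 1 ≤ dc) (hx : x ∈ Ioc 0 1) :
    regularBPThreshold dv dc ≤ x / (1 - (1 - x) ^ (dc - 1)) ^ (dv - 1) := by
  refine csInf_le ⟨0, ?_⟩ ⟨x, hx, rfl⟩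
  rintro _ ⟨y, hy, rfl⟩
  exact div_one_sub_one_sub_rpow_rpow_nonneg dv hdc hy

lemma one_sub_rpow_le_exp_neg_mul {x p : ℝ} (hx : x ≤ 1) (hp : 0 ≤ p) :
    (1 - x) ^ p ≤ exp (-(x * p)) := by
  rw [← neg_mul, exp_mul]
  exact rpow_le_rpow (by linarith) (one_sub_le_exp_neg x) hp

lemma half_le_one_sub_rpow {q t : ℝ} (hq : 1 ≤ q) (ht : 0 ≤ t) (hqt : q * t ≤ 1 / 2) :
    1 / 2 ≤ (1 - t) ^ q := by
  have ht1 : -1 ≤ -t := by nlinarith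
  have := one_add_mul_self_le_rpow_one_add ht1 hq
  rw [← sub_eq_add_neg] at this
  linarith

lemma regularBPThreshold_le_log {dv dc : ℝ} (hdv : 2 ≤ dv) (hdc : 1 < dc)
    (hlog : log (2 * dv) ≤ dc - 1) :
    regularBPThreshold dv dc ≤ 2 * log (2 * dv) / (dc - 1) := by
  set x := log (2 * dv) / (dc - 1) with hx
  have hp : 0 < dc - 1 := by linarith
  have hx0 : 0 < x := div_pos (log_pos (by linarith)) hp
  have hx1 : x ≤ 1 := (div_le_one hp).2 hlog
  have htail : (1 - x) ^ (dc - 1) ≤ 1 / (2 * dv) := by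
    calc (1 - x) ^ (dc - 1) ≤ exp (-(x * (dc - 1))) := one_sub_rpow_le_exp_neg_mul hx1 hp.le
      _ = 1 / (2 * dv) := by
        rw [hx, div_mul_cancel₀ _ hp.ne', exp_neg, exp_log (by linarith), one_div]
  have hden : 1 / 2 ≤ (1 - (1 - x) ^ (dc - 1)) ^ (dv - 1) := by
    refine half_le_one_sub_rpow (by linarith) (rpow_nonneg (by linarith) _) ?_
    calc (dv - 1) * (1 - x) ^ (dc - 1) ≤ dv * (1 / (2 * dv)) := by
          gcongr
          linarith
      _ = 1 / 2 := by field_simp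
  calc regularBPThreshold dv dc ≤ x / (1 - (1 - x) ^ (dc - 1)) ^ (dv - 1) :=
        regularBPThreshold_le dv hdc.le ⟨hx0, hx1⟩
    _ ≤ x / (1 / 2) := div_le_div_of_nonneg_left hx0.le (by norm_num) hden
    _ = 2 * log (2 * dv) / (dc - 1) := by rw [hx]; ring

lemma tendsto_log_two_mul_div_atTop :
    Tendsto (fun x : ℝ => log (2 * x) / x) atTop (𝓝 0) := by
  have h := (isLittleO_log_id_atTop.tendsto_div_nhds_zero.comp
    (tendsto_id.const_mul_atTop two_pos)).const_mul 2
  rw [mul_zero] at h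
  refine h.congr' ?_
  filter_upwards [eventually_gt_atTop 0] with x hx
  simp only [Function.comp_apply, id]
  field_simp

/-- For the sequence of `(l, l/(1−r))`-regular LDPC ensembles of fixed design
rate `r ∈ (0,1)`, the BP threshold
`ε^{BP}(l) = inf_{x ∈ (0,1]} x/(1−(1−x)^{l/(1−r)−1})^{l−1}` tends to `0` as `l → ∞`. -/
theorem regular_bp_threshold_tendsto_zero (r : ℝ) (hr : r ∈ Set.Ioo (0:ℝ) 1) :
    Tendsto
      (fun l : ℕ =>
        sInf ((fun x : ℝ =>
          x / ((1 - (1 - x) ^ ((l : ℝ) / (1 - r) - 1)) ^ ((l : ℝ) - 1))) ''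
            Set.Ioc 0 1))
      atTop (nhds 0) := by
  show Tendsto (fun l : ℕ => regularBPThreshold l (l / (1 - r))) atTop (𝓝 0)
  have hc : 0 < 1 - r := by linarith [hr.2]
  have hdc (l : ℕ) : (l : ℝ) ≤ l / (1 - r) :=
    le_div_self (Nat.cast_nonneg l) hc (by linarith [hr.1])
  have hbound := (tendsto_log_two_mul_div_atTop.comp tendsto_natCast_atTop_atTop).const_mul 4
  rw [mul_zero] at hbound
  refine tendsto_of_tendsto_of_tendsto_of_le_of_le' tendsto_const_nhds hbound ?_ ?_
  · filter_upwards [eventually_ge_atTop 1] with l hl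
    replace hl : (1 : ℝ) ≤ l := by exact_mod_cast hl
    exact regularBPThreshold_nonneg _ (by linarith [hdc l])
  · filter_upwards [eventually_ge_atTop 2, hbound.eventually (eventually_le_nhds two_pos)]
      with l hl hsmall
    replace hl : (2 : ℝ) ≤ l := by exact_mod_cast hl
    have hp : (l : ℝ) / 2 ≤ l / (1 - r) - 1 := by linarith [hdc l]
    have hlog : 0 ≤ log (2 * l) := log_nonneg (by linarith)
    have hlog_le : log (2 * l) ≤ l / 2 := by
      simp only [Function.comp_apply] at hsmall
      rw [mul_div_assoc', div_le_iff₀ (by linarith)] at hsmall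
      linarith
    calc regularBPThreshold l (l / (1 - r)) ≤ 2 * log (2 * l) / (l / (1 - r) - 1) :=
          regularBPThreshold_le_log hl (by linarith [hdc l]) (by linarith)
      _ ≤ 2 * log (2 * l) / (l / 2) := by gcongr
      _ = 4 * (log (2 * l) / l) := by ring
end

section
/- Fix r ∈ (0,1), and for l ≥ 2 define ε_l(h) = (1 − (1 − h^{1/l})^{(r−1)/(l−r+1)}) / h^{(l−1)/l} for h ∈ (0,1). Then for each fixed h ∈ (0,1), ε_l(h) → 0 as l → ∞. -/
/-!
Write `a = 1 - h^(1/x)` and `s = (r-1)/(x-r+1) ≤ 0`. Since `y (-log y) ≤ 1 - y` for `y = h^(1/x) ≥ h`,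
we have `c/x ≤ a ≤ 1` with `c = -h log h > 0`, hence `1 ≤ a^s ≤ (c/x)^s`. The upper bound tends
to `1` because `s → 0` and `x^s → 1` (as `s log x = O(log x / x)`). So the numerator of `ε_l(h)`
tends to `0`, while its denominator `h^((l-1)/l)` tends to `h ≠ 0`.
-/

open Filter Topology Real

lemma mul_neg_log_le_one_sub {y : ℝ} (hy : 0 < y) : y * -log y ≤ 1 - y := by
  have hlog := log_le_sub_one_of_pos (inv_pos.2 hy)
  rw [log_inv] at hlog
  calc y * -log y ≤ y * (y⁻¹ - 1) := by gcongr
    _ = 1 - y := by field_simp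

lemma neg_log_mul_div_le_one_sub_rpow_inv {h x : ℝ} (h0 : 0 < h) (h1 : h ≤ 1) (hx : 1 ≤ x) :
    -log h * h / x ≤ 1 - h ^ (1 / x) := by
  have hy : h ≤ h ^ (1 / x) := by
    simpa using rpow_le_rpow_of_exponent_ge h0 h1 ((div_le_one (by linarith)).2 hx)
  have hlog : -log (h ^ (1 / x)) = -log h / x := by
    rw [log_rpow h0]; ring
  have hL : 0 ≤ -log h / x := div_nonneg (neg_nonneg.2 (log_nonpos h0.le h1)) (by linarith)
  calc -log h * h / x = h * (-log h / x) := by ring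
    _ ≤ h ^ (1 / x) * -log (h ^ (1 / x)) := by rw [hlog]; gcongr
    _ ≤ 1 - h ^ (1 / x) := mul_neg_log_le_one_sub (rpow_pos_of_pos h0 _)

lemma tendsto_div_rpow_div_add_atTop {c : ℝ} (hc : 0 < c) (a b : ℝ) :
    Tendsto (fun x => (c / x) ^ (a / (x + b))) atTop (𝓝 1) := by
  have hexp : Tendsto (fun x => a / (x + b)) atTop (𝓝 0) :=
    tendsto_const_nhds.div_atTop (tendsto_atTop_add_const_right _ b tendsto_id)
  have hc' : Tendsto (fun x => c ^ (a / (x + b))) atTop (𝓝 1) := by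
    simpa using tendsto_const_nhds.rpow hexp (Or.inl hc.ne')
  have hx : Tendsto (fun x => x ^ (a / (x + b))) atTop (𝓝 1) := by
    simpa using tendsto_rpow_div_mul_add a 1 b zero_ne_one
  have hquot := hc'.div hx one_ne_zero
  rw [div_one] at hquot
  refine hquot.congr' ?_
  filter_upwards [eventually_gt_atTop 0] with x hx0
  exact (div_rpow hc.le hx0.le _).symm

lemma tendsto_one_sub_rpow_inv_rpow {r h : ℝ} (hr : r < 1) (h0 : 0 < h) (h1 : h < 1) :
    Tendsto (fun x : ℝ => (1 - h ^ (1 / x)) ^ ((r - 1) / (x - r + 1))) atTop (𝓝 1) := by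
  set c := -log h * h
  have hc : 0 < c := mul_pos (neg_pos.2 (log_neg h0 h1)) h0
  have hupper := tendsto_div_rpow_div_add_atTop hc (r - 1) (1 - r)
  refine tendsto_of_tendsto_of_tendsto_of_le_of_le' tendsto_const_nhds hupper ?_ ?_
  all_goals
    filter_upwards [eventually_ge_atTop 1] with x hx
    have hs : (r - 1) / (x - r + 1) ≤ 0 := div_nonpos_of_nonpos_of_nonneg (by linarith) (by linarith)
    have hlow := neg_log_mul_div_le_one_sub_rpow_inv h0 h1.le hx
    have hcx : 0 < c / x := by positivity
  · exact one_le_rpow_of_pos_of_le_one_of_nonpos (hcx.trans_le hlow)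
      (by linarith [rpow_pos_of_pos h0 (1 / x)]) hs
  · rw [show x + (1 - r) = x - r + 1 by ring]
    exact rpow_le_rpow_of_nonpos hcx hlow hs

lemma tendsto_sub_one_div_self_atTop : Tendsto (fun x : ℝ => (x - 1) / x) atTop (𝓝 1) := by
  have hlim := tendsto_const_nhds (x := (1 : ℝ)).sub tendsto_inv_atTop_zero
  rw [sub_zero] at hlim
  refine hlim.congr' ?_
  filter_upwards [eventually_ne_atTop 0] with x hx
  field_simp

/-- The inverse parameterization of the BP EXIT curve of the
`(l, l/(1−r))`-regular LDPC ensemble,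
`ε_l(h) = (1 − (1 − h^{1/l})^{(r−1)/(l−r+1)}) / h^{(l−1)/l}`,
tends to `0` as `l → ∞`, for every fixed `h ∈ (0,1)`. -/
theorem regular_exit_inverse_tendsto_zero (r : ℝ) (hr : r ∈ Set.Ioo (0:ℝ) 1)
    (h : ℝ) (hh : h ∈ Set.Ioo (0:ℝ) 1) :
    Tendsto
      (fun l : ℕ =>
        (1 - (1 - h ^ ((1:ℝ) / l)) ^ ((r - 1) / ((l : ℝ) - r + 1))) /
          h ^ (((l : ℝ) - 1) / l))
      atTop (nhds 0) := by
  have hnum := (tendsto_one_sub_rpow_inv_rpow hr.2 hh.1 hh.2).comp tendsto_natCast_atTop_atTop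
  have hden := (tendsto_const_nhds (x := h).rpow tendsto_sub_one_div_self_atTop
    (Or.inr one_pos)).comp tendsto_natCast_atTop_atTop
  rw [rpow_one] at hden
  have hquot := (tendsto_const_nhds (x := (1 : ℝ)).sub hnum).div hden hh.1.ne'
  rwa [sub_self, zero_div] at hquot
end

section
/- Let Ψ_Ξ(u) be defined for u ≥ 0 by Ψ_Ξ(u) = −Λ'(1)·log₂[(1+u·v)/((1+u)(1+v))] + Σ_d Λ_d·log₂[(1+u^d)/(2(1+u)^d)] + (Λ'(1)/Γ'(1))·Σ_k Γ_k·log₂[1 + ((1−v)/(1+v))^k], where v = v(u) satisfies v(1/u) = 1/v(u). Then Ψ_Ξ(1) = 0, and Ψ_Ξ attains its maximum over [0,∞) at some point in [0,1]; in fact Ψ_Ξ(1/u) ≥ Ψ_Ξ(u) for every u > 1. -/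
/-!
The substitution `u ↦ 1/u` sends `v` to `1/v`; it leaves the first two terms of `Ψ` unchanged
and turns `s = (1 - v)/(1 + v)` into `-s` in the check-node term. For `u > 1` we have `v ≥ 1`,
so `s ∈ (-1, 0]` and `s ^ k ≤ (-s) ^ k`, whence `Ψ(u) ≤ Ψ(1/u)`. A maximum of the continuous
function `Ψ` on the compact interval `[0, 1]` is therefore a maximum on `[0, ∞)`.
-/

open Finset

/-- Edge-perspective coefficients `λ_d = d·Λ_d / Λ'(1)`. -/
noncomputable def edgeCoeff (N : ℕ) (Lc : ℕ → ℝ) (d : ℕ) : ℝ :=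
  d * Lc d / (∑ e ∈ Finset.range N, (e : ℝ) * Lc e)

/-- `v(u) = (Σ_d λ_d u^{d−1}/(1+u^d)) / (Σ_d λ_d/(1+u^d))`. -/
noncomputable def vFun (N : ℕ) (Lc : ℕ → ℝ) (u : ℝ) : ℝ :=
  (∑ d ∈ Finset.range N, edgeCoeff N Lc d * u ^ (d - 1) / (1 + u ^ d)) /
    (∑ d ∈ Finset.range N, edgeCoeff N Lc d / (1 + u ^ d))

/-- The weight-enumerator exponent function `Ψ_Ξ(u)` of an LDPC ensemble with
node-perspective degree distributions `Λ` (variables) and `Γ` (checks). -/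
noncomputable def Psi (N K : ℕ) (Lc Gc : ℕ → ℝ) (u : ℝ) : ℝ :=
  -(∑ d ∈ Finset.range N, (d : ℝ) * Lc d) *
      Real.logb 2 ((1 + u * vFun N Lc u) / ((1 + u) * (1 + vFun N Lc u))) +
    (∑ d ∈ Finset.range N, Lc d * Real.logb 2 ((1 + u ^ d) / (2 * (1 + u) ^ d))) +
    ((∑ d ∈ Finset.range N, (d : ℝ) * Lc d) / (∑ k ∈ Finset.range K, (k : ℝ) * Gc k)) *
      ∑ k ∈ Finset.range K, Gc k *
        Real.logb 2 (1 + ((1 - vFun N Lc u) / (1 + vFun N Lc u)) ^ k)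

theorem sum_le_sum_natCast_mul {s : Finset ℕ} {f : ℕ → ℝ} (hf : ∀ i ∈ s, 0 ≤ f i)
    (h0 : f 0 = 0) : ∑ i ∈ s, f i ≤ ∑ i ∈ s, (i : ℝ) * f i := by
  refine sum_le_sum fun i hi => ?_
  rcases i.eq_zero_or_pos with rfl | hi0
  · simp [h0]
  · exact le_mul_of_one_le_left (hf i hi) (by exact_mod_cast hi0)

theorem neg_one_lt_pow_of_neg_one_lt {s : ℝ} (hs : -1 < s) (k : ℕ) :
    -1 < s ^ k := by
  rcases le_or_gt 0 s with hs₀ | hs₀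
  · linarith [pow_nonneg hs₀ k]
  · rcases k.eq_zero_or_pos with rfl | hk
    · simp
    · have : |s ^ k| < 1 := by
        rw [abs_pow]
        exact pow_lt_one₀ (abs_nonneg s) (abs_lt.2 ⟨hs, by linarith⟩) hk.ne'
      exact (abs_lt.1 this).1

theorem neg_one_lt_one_sub_div_one_add {v : ℝ} (hv : -1 < v) : -1 < (1 - v) / (1 + v) := by
  rw [lt_div_iff₀ (by linarith)]
  linarith

theorem logb_one_add_pow_le_logb_one_add_neg_pow {b s : ℝ} (hb : 1 < b) (hs₁ : -1 < s)
    (hs₂ : s ≤ 0) (k : ℕ) : Real.logb b (1 + s ^ k) ≤ Real.logb b (1 + (-s) ^ k) := by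
  have hpos : 0 < 1 + s ^ k := by linarith [neg_one_lt_pow_of_neg_one_lt hs₁ k]
  have hle : s ^ k ≤ (-s) ^ k := by
    simpa [abs_pow, abs_of_nonpos hs₂] using le_abs_self (s ^ k)
  exact Real.logb_le_logb_of_le hb hpos (by linarith)

theorem exists_forall_le_of_le_one_div {f : ℝ → ℝ} (hf : ContinuousOn f (Set.Icc 0 1))
    (h : ∀ u, 1 < u → f u ≤ f (1 / u)) :
    ∃ u₀ ∈ Set.Icc (0 : ℝ) 1, ∀ u, 0 ≤ u → f u ≤ f u₀ := by
  obtain ⟨u₀, hu₀, hmax⟩ := isCompact_Icc.exists_isMaxOn (Set.nonempty_Icc.2 zero_le_one) hf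
  refine ⟨u₀, hu₀, fun u hu => ?_⟩
  rcases le_or_gt u 1 with hu₁ | hu₁
  · exact hmax ⟨hu, hu₁⟩
  · refine (h u hu₁).trans (hmax ⟨by positivity, ?_⟩)
    rw [div_le_one (by linarith)]
    exact hu₁.le

section Reciprocal

variable {u : ℝ}

theorem one_add_inv_mul_inv_div (hu : 0 < u) {v : ℝ} (hv : 0 < v) :
    (1 + u⁻¹ * v⁻¹) / ((1 + u⁻¹) * (1 + v⁻¹)) = (1 + u * v) / ((1 + u) * (1 + v)) := by
  field_simp
  ring

theorem one_add_inv_pow_div (hu : 0 < u) (d : ℕ) :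
    (1 + u⁻¹ ^ d) / (2 * (1 + u⁻¹) ^ d) = (1 + u ^ d) / (2 * (1 + u) ^ d) := by
  rw [inv_pow, show 1 + u⁻¹ = (1 + u) / u by field_simp; ring, div_pow]
  field_simp
  ring

theorem one_sub_inv_div_one_add_inv (hu : 0 < u) :
    (1 - u⁻¹) / (1 + u⁻¹) = -((1 - u) / (1 + u)) := by
  field_simp
  ring

end Reciprocal

section EdgeCoeff

variable {N : ℕ} {Lc : ℕ → ℝ}

@[simp]
theorem edgeCoeff_zero : edgeCoeff N Lc 0 = 0 := by
  simp [edgeCoeff]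

theorem edgeCoeff_nonneg (hL : ∀ d, 0 ≤ Lc d) (d : ℕ) : 0 ≤ edgeCoeff N Lc d :=
  div_nonneg (mul_nonneg d.cast_nonneg (hL d))
    (sum_nonneg fun e _ => mul_nonneg e.cast_nonneg (hL e))

theorem sum_edgeCoeff_div_pos (hL : ∀ d, 0 ≤ Lc d)
    (hmean : 0 < ∑ d ∈ range N, (d : ℝ) * Lc d) {u : ℝ} (hu : 0 ≤ u) :
    0 < ∑ d ∈ range N, edgeCoeff N Lc d / (1 + u ^ d) := by
  obtain ⟨d, hd, hpos⟩ := exists_lt_of_sum_lt (f := fun _ => (0 : ℝ)) (by simpa using hmean)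
  refine sum_pos' (fun d _ => ?_) ⟨d, hd, div_pos (div_pos hpos hmean) (by positivity)⟩
  have := edgeCoeff_nonneg (N := N) hL d
  positivity

end EdgeCoeff

section VFun

variable {N : ℕ} {Lc : ℕ → ℝ} {u : ℝ}

theorem vFun_nonneg (hL : ∀ d, 0 ≤ Lc d) (hu : 0 ≤ u) : 0 ≤ vFun N Lc u := by
  refine div_nonneg (sum_nonneg fun d _ => ?_) (sum_nonneg fun d _ => ?_) <;>
  · have := edgeCoeff_nonneg (N := N) hL d
    positivity

theorem one_le_vFun (hL : ∀ d, 0 ≤ Lc d) (hmean : 0 < ∑ d ∈ range N, (d : ℝ) * Lc d)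
    (hu : 1 ≤ u) : 1 ≤ vFun N Lc u := by
  rw [vFun, one_le_div (sum_edgeCoeff_div_pos hL hmean (by linarith))]
  refine sum_le_sum fun d _ => div_le_div_of_nonneg_right ?_ (by positivity)
  exact le_mul_of_one_le_right (edgeCoeff_nonneg hL d) (one_le_pow₀ hu)

theorem vFun_one (hL : ∀ d, 0 ≤ Lc d) (hmean : 0 < ∑ d ∈ range N, (d : ℝ) * Lc d) :
    vFun N Lc 1 = 1 := by
  rw [vFun, div_eq_one_iff_eq (sum_edgeCoeff_div_pos hL hmean zero_le_one).ne']
  simp only [one_pow, mul_one]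

/-- The substitution `u ↦ 1/u` swaps, up to the factor `u`, the numerator and the
denominator of `v`. -/
theorem vFun_inv (hu : 0 < u) : vFun N Lc u⁻¹ = (vFun N Lc u)⁻¹ := by
  have hnum : ∑ d ∈ range N, edgeCoeff N Lc d * u⁻¹ ^ (d - 1) / (1 + u⁻¹ ^ d)
      = u * ∑ d ∈ range N, edgeCoeff N Lc d / (1 + u ^ d) := by
    rw [mul_sum]
    refine sum_congr rfl fun d _ => ?_
    rcases d with _ | m
    · simp
    · rw [Nat.add_sub_cancel, inv_pow, inv_pow]
      field_simp
      ring
  have hden : ∑ d ∈ range N, edgeCoeff N Lc d / (1 + u⁻¹ ^ d)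
      = u * ∑ d ∈ range N, edgeCoeff N Lc d * u ^ (d - 1) / (1 + u ^ d) := by
    rw [mul_sum]
    refine sum_congr rfl fun d _ => ?_
    rcases d with _ | m
    · simp
    · rw [Nat.add_sub_cancel, inv_pow]
      field_simp
      ring
  rw [vFun, vFun, hnum, hden, inv_div, mul_div_mul_left _ _ hu.ne']

theorem continuousAt_vFun (hL : ∀ d, 0 ≤ Lc d) (hmean : 0 < ∑ d ∈ range N, (d : ℝ) * Lc d)
    (hu : 0 ≤ u) : ContinuousAt (vFun N Lc) u := by
  have hden := sum_edgeCoeff_div_pos hL hmean hu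
  unfold vFun
  fun_prop (disch := first | exact hden.ne' | positivity)

end VFun

section Psi

variable {N K : ℕ} {Lc Gc : ℕ → ℝ}

theorem Psi_one (hL : ∀ d, 0 ≤ Lc d) (hmean : 0 < ∑ d ∈ range N, (d : ℝ) * Lc d)
    (hG0 : Gc 0 = 0) : Psi N K Lc Gc 1 = 0 := by
  have hA : Real.logb 2 ((1 + 1 * 1) / ((1 + 1) * (1 + 1))) = -1 := by
    rw [show (1 + 1 * 1) / ((1 + 1) * (1 + 1)) = (2⁻¹ : ℝ) by norm_num, Real.logb_inv,
      Real.logb_self_eq_one one_lt_two]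
  have hB (d : ℕ) : Lc d * Real.logb 2 ((1 + 1 ^ d) / (2 * (1 + 1) ^ d)) = -(d * Lc d) := by
    rw [one_pow, one_add_one_eq_two, div_mul_cancel_left₀ two_ne_zero, Real.logb_inv,
      Real.logb_pow, Real.logb_self_eq_one one_lt_two]
    ring
  have hC (k : ℕ) : Gc k * Real.logb 2 (1 + ((1 - 1) / (1 + 1)) ^ k) = 0 := by
    rcases k with _ | k <;> simp [hG0]
  simp only [Psi, vFun_one hL hmean, hA, hB, hC, sum_neg_distrib, sum_const_zero]
  ring

theorem Psi_le_Psi_one_div (hL : ∀ d, 0 ≤ Lc d) (hG : ∀ k, 0 ≤ Gc k)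
    (hmean : 0 < ∑ d ∈ range N, (d : ℝ) * Lc d) {u : ℝ} (hu : 1 < u) :
    Psi N K Lc Gc u ≤ Psi N K Lc Gc (1 / u) := by
  have hu₀ : 0 < u := by linarith
  have hv := one_le_vFun hL hmean hu.le
  rw [one_div, Psi, Psi, vFun_inv hu₀, one_add_inv_mul_inv_div hu₀ (by linarith),
    one_sub_inv_div_one_add_inv (by linarith)]
  simp only [one_add_inv_pow_div hu₀]
  gcongr _ + _ + _ * ∑ k ∈ _, _ * ?_ with k
  · exact div_nonneg hmean.le (sum_nonneg fun k _ => mul_nonneg k.cast_nonneg (hG k))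
  · exact hG k
  · exact logb_one_add_pow_le_logb_one_add_neg_pow one_lt_two
      (neg_one_lt_one_sub_div_one_add (by linarith))
      (div_nonpos_of_nonpos_of_nonneg (by linarith) (by linarith)) k

theorem continuousAt_Psi (hL : ∀ d, 0 ≤ Lc d) (hmean : 0 < ∑ d ∈ range N, (d : ℝ) * Lc d)
    {u : ℝ} (hu : 0 ≤ u) : ContinuousAt (Psi N K Lc Gc) u := by
  have hv := vFun_nonneg (N := N) hL hu
  have hs : ∀ k : ℕ, 1 + ((1 - vFun N Lc u) / (1 + vFun N Lc u)) ^ k ≠ 0 := fun k => by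
    linarith [neg_one_lt_pow_of_neg_one_lt (neg_one_lt_one_sub_div_one_add (by linarith)) k]
  have hvc := continuousAt_vFun (N := N) hL hmean hu
  unfold Psi
  fun_prop (disch := first | exact hs _ | positivity)

end Psi

theorem psi_max_in_unit_interval_general (N K : ℕ) (Lc Gc : ℕ → ℝ)
    (hL : ∀ d, 0 ≤ Lc d) (hG : ∀ k, 0 ≤ Gc k)
    (hL0 : Lc 0 = 0) (hG0 : Gc 0 = 0)
    (hLsum : ∑ d ∈ Finset.range N, Lc d = 1) :
    Psi N K Lc Gc 1 = 0 ∧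
    (∀ u : ℝ, 1 < u → Psi N K Lc Gc u ≤ Psi N K Lc Gc (1 / u)) ∧
    ∃ u₀ ∈ Set.Icc (0:ℝ) 1, ∀ u : ℝ, 0 ≤ u → Psi N K Lc Gc u ≤ Psi N K Lc Gc u₀ := by
  have hmean : 0 < ∑ d ∈ range N, (d : ℝ) * Lc d :=
    zero_lt_one.trans_le (hLsum ▸ sum_le_sum_natCast_mul (fun d _ => hL d) hL0)
  have hsymm := fun u (hu : 1 < u) => Psi_le_Psi_one_div (K := K) (Gc := Gc) hL hG hmean hu
  refine ⟨Psi_one hL hmean hG0, hsymm, exists_forall_le_of_le_one_div ?_ hsymm⟩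
  exact continuousOn_of_forall_continuousAt fun u hu => continuousAt_Psi hL hmean hu.1

/-- `Ψ_Ξ(1) = 0`, `Ψ_Ξ(1/u) ≥ Ψ_Ξ(u)` for every `u > 1`, and `Ψ_Ξ` attains its
maximum over `[0,∞)` at some point of `[0,1]`. -/
theorem psi_max_in_unit_interval (N K : ℕ) (Lc Gc : ℕ → ℝ)
    (hL : ∀ d, 0 ≤ Lc d) (hG : ∀ k, 0 ≤ Gc k)
    (hL0 : Lc 0 = 0) (hG0 : Gc 0 = 0)
    (hLsum : ∑ d ∈ Finset.range N, Lc d = 1)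
    (hGsum : ∑ k ∈ Finset.range K, Gc k = 1) :
    Psi N K Lc Gc 1 = 0 ∧
    (∀ u : ℝ, 1 < u → Psi N K Lc Gc u ≤ Psi N K Lc Gc (1 / u)) ∧
    ∃ u₀ ∈ Set.Icc (0:ℝ) 1, ∀ u : ℝ, 0 ≤ u → Psi N K Lc Gc u ≤ Psi N K Lc Gc u₀ :=
  psi_max_in_unit_interval_general N K Lc Gc hL hG hL0 hG0 hLsum
end
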